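/- arXiv:2009.12487 — 2 statements merged into one kernel-verified Lean document; each statement's English description precedes it below -/
import Mathlib

section
/- Let β ∈ ℝ^p with β ≠ 0 and k ∈ {1,…,p}, and define w_k(β) = −(1/2)(‖β‖₂² I + 2ββᵀ)^{-1} e_k, where e_k is the k-th standard basis vector. Then w_k(β) = −(1/(2‖β‖₂²)) e_k + (β_k/(3‖β‖₂⁴)) β, and consequently supp(w_k(β)) ⊆ supp(β) ∪ {k}. -/
open MeasureTheory ProbabilityTheory

noncomputable section

/-- Euclidean dot product on `ℝ^p`. -/
def dot {p : ℕ} (u v : Fin p → ℝ) : ℝ := ∑ i, u i * v i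

/-- Euclidean norm on `ℝ^p`. -/
def nrm {p : ℕ} (v : Fin p → ℝ) : ℝ := Real.sqrt (∑ i, (v i)^2)

/-- The matrix `‖b‖₂² I + 2 b bᵀ` (population Fisher information / Hessian). -/
def fisherM {p : ℕ} (b : Fin p → ℝ) : Matrix (Fin p) (Fin p) ℝ :=
  (nrm b ^ 2) • (1 : Matrix (Fin p) (Fin p) ℝ) + (2:ℝ) • Matrix.vecMulVec b b

/-- The correction direction `w_k(b) = -(1/2) (‖b‖₂² I + 2 b bᵀ)⁻¹ e_k`. -/
def wvec {p : ℕ} (b : Fin p → ℝ) (k : Fin p) : Fin p → ℝ :=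
  (-(1/2) : ℝ) • (fisherM b)⁻¹.mulVec (Pi.single k 1)

/-- Operator (spectral) norm of a matrix acting on Euclidean space. -/
def opNorm {p : ℕ} (A : Matrix (Fin p) (Fin p) ℝ) : ℝ :=
  ‖LinearMap.toContinuousLinearMap (Matrix.toEuclideanLin A)‖

/-- Restriction of a vector to a coordinate set `S` (zero outside `S`). -/
def restr {p : ℕ} (S : Finset (Fin p)) (v : Fin p → ℝ) : Fin p → ℝ :=
  fun i => if i ∈ S then v i else 0

/-- Gradient of the phase-retrieval objective
`f(b) = (1/(4n)) ∑ⱼ ((xⱼᵀb)² - yⱼ)²`, namely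
`∇f(b) = (1/n) ∑ⱼ ((xⱼᵀb)² - yⱼ)(xⱼᵀb) xⱼ`. -/
def gradf {p n : ℕ} (x : Fin n → Fin p → ℝ) (y : Fin n → ℝ) (b : Fin p → ℝ) : Fin p → ℝ :=
  (1/(n:ℝ)) • ∑ j, (((dot (x j) b)^2 - y j) * dot (x j) b) • x j

/-!
The matrix `‖β‖² I + 2ββᵀ` is a scaled identity plus a rank-one term, so the Sherman–Morrison
formula inverts it explicitly as `‖β‖⁻² I - (2 / (3‖β‖⁴)) ββᵀ`; its `k`-th column is a combination
of `e_k` and `β`, which gives both the formula for `w_k(β)` and the support bound.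
-/

open Matrix

theorem Matrix.inv_smul_one_add_smul_vecMulVec {K n : Type*} [Field K] [Fintype n]
    [DecidableEq n] (u v : n → K) {a c : K} (ha : a ≠ 0) (hac : a + c * (v ⬝ᵥ u) ≠ 0) :
    (a • (1 : Matrix n n K) + c • vecMulVec u v)⁻¹ =
      a⁻¹ • (1 : Matrix n n K) - (c / (a * (a + c * (v ⬝ᵥ u)))) • vecMulVec u v := by
  refine inv_eq_right_inv ?_
  set s := v ⬝ᵥ u
  set d := c / (a * (a + c * s))
  have hsq : vecMulVec u v * vecMulVec u v = s • vecMulVec u v := by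
    rw [vecMulVec_mul_vecMulVec, vecMulVec_smul]
  have hcoeff : c * a⁻¹ - a * d - c * d * s = 0 := by
    simp only [d]
    field_simp
    ring
  calc (a • 1 + c • vecMulVec u v) * (a⁻¹ • 1 - d • vecMulVec u v)
      = (a * a⁻¹) • 1 + (c * a⁻¹ - a * d - c * d * s) • vecMulVec u v := by
        simp only [mul_sub, add_mul, smul_mul_smul_comm, one_mul, mul_one, hsq,
          smul_smul, sub_smul]
        abel
    _ = 1 := by rw [hcoeff, mul_inv_cancel₀ ha, zero_smul, add_zero, one_smul]

theorem nrm_sq {p : ℕ} (v : Fin p → ℝ) : nrm v ^ 2 = v ⬝ᵥ v := by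
  rw [nrm, Real.sq_sqrt (Finset.sum_nonneg fun i _ => sq_nonneg (v i))]
  simp only [dotProduct, sq]

theorem fisherM_inv {p : ℕ} {β : Fin p → ℝ} (hβ : β ≠ 0) :
    (fisherM β)⁻¹ = (nrm β ^ 2)⁻¹ • (1 : Matrix (Fin p) (Fin p) ℝ)
      - (2 / (3 * nrm β ^ 4)) • vecMulVec β β := by
  have hpos : 0 < nrm β ^ 2 := by
    rw [nrm_sq]
    exact (dotProduct_star_self_nonneg β).lt_of_ne' (dotProduct_self_eq_zero.not.mpr hβ)
  rw [fisherM, inv_smul_one_add_smul_vecMulVec β β hpos.ne' (by rw [← nrm_sq]; positivity),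
    ← nrm_sq]
  congr 2
  field_simp
  ring

theorem wvec_eq {p : ℕ} {β : Fin p → ℝ} (hβ : β ≠ 0) (k : Fin p) :
    wvec β k = (-(1 / (2 * nrm β ^ 2))) • (Pi.single k 1 : Fin p → ℝ)
      + (β k / (3 * nrm β ^ 4)) • β := by
  rw [wvec, fisherM_inv hβ, mulVec_single_one]
  ext i
  simp only [Pi.smul_apply, Pi.add_apply, col_apply, Matrix.sub_apply, Matrix.smul_apply, one_apply,
    vecMulVec_apply, Pi.single_apply, smul_eq_mul]
  split_ifs <;> ring

theorem support_smul_single_add_smul_subset {ι R : Type*} [DecidableEq ι] [Semiring R]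
    (a b x : R) (k : ι) (v : ι → R) :
    Function.support (a • Pi.single k x + b • v) ⊆ Function.support v ∪ {k} := by
  refine (Function.support_add _ _).trans (Set.union_subset ?_ ?_)
  · exact (Function.support_const_smul_subset a _).trans
      (Pi.support_single_subset.trans Set.subset_union_right)
  · exact (Function.support_const_smul_subset b v).trans Set.subset_union_left

/-- Explicit formula `w_k(β) = −(1/(2‖β‖₂²)) e_k + (β_k/(3‖β‖₂⁴)) β` for the
correction direction, and the consequent support containment
`supp(w_k(β)) ⊆ supp(β) ∪ {k}`. -/
theorem stmt_7 {p : ℕ} (β : Fin p → ℝ) (hβ : β ≠ 0) (k : Fin p) :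
    wvec β k = (-(1 / (2 * nrm β ^ 2))) • (Pi.single k 1 : Fin p → ℝ)
        + (β k / (3 * nrm β ^ 4)) • β ∧
    Function.support (wvec β k) ⊆ Function.support β ∪ {k} := by
  rw [wvec_eq hβ k]
  exact ⟨rfl, support_smul_single_add_smul_subset _ _ _ k β⟩
end
end

section
/- Let n, p be positive integers, k ∈ {1,…,p}, and let x_1,…,x_n ∈ ℝ^p, ε_1,…,ε_n ∈ ℝ, β, β̃ ∈ ℝ^p and w, w̃ ∈ ℝ^p be arbitrary. Set y_j = (x_jᵀβ)² + ε_j, Δ = β̃ − β, and β̂_k = β̃_k + w̃ᵀ [ (1/n) Σ_{j=1}^n ((x_jᵀβ̃)² − y_j)(x_jᵀβ̃) x_j ]. Then β̂_k − β_k = e_kᵀΔ + (2/n) Σ_j (x_jᵀΔ)(x_jᵀ w)(x_jᵀβ)² + (2/n) Σ_j (x_jᵀΔ)(x_jᵀ(w̃ − w))(x_jᵀβ)² + (1/n) Σ_j (x_jᵀΔ)³ (x_jᵀ w̃) + (3/n) Σ_j (x_jᵀΔ)² (x_jᵀ w̃)(x_jᵀβ) − (1/n) Σ_j ε_j (x_jᵀβ̃)(x_jᵀ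 w̃). -/
open MeasureTheory ProbabilityTheory

noncomputable section

/-!
Writing `a = xⱼᵀβ` and `t = xⱼᵀβ̃`, the `j`-th summand of `w̃ᵀ∇f(β̃)` is `(t² - a² - εⱼ) t (xⱼᵀw̃)`
by the model. Expanding it in `t - a = xⱼᵀΔ`, and splitting `xⱼᵀw̃ = xⱼᵀw + xⱼᵀ(w̃ - w)` in the
leading term `2 (t - a) a² (xⱼᵀw̃)`, gives the stated terms; `e_kᵀΔ` is `β̃_k - β_k`.
-/

lemma dot_eq_dotProduct {p : ℕ} (u v : Fin p → ℝ) : dot u v = u ⬝ᵥ v := rfl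

lemma dot_sub_right {p : ℕ} (u a b : Fin p → ℝ) : dot u (a - b) = dot u a - dot u b :=
  dotProduct_sub u a b

lemma dot_gradf {p n : ℕ} (v : Fin p → ℝ) (x : Fin n → Fin p → ℝ) (y : Fin n → ℝ)
    (b : Fin p → ℝ) :
    dot v (gradf x y b)
      = (1/(n:ℝ)) * ∑ j, ((dot (x j) b)^2 - y j) * dot (x j) b * dot (x j) v := by
  simp only [dot_eq_dotProduct, gradf, dotProduct_smul, dotProduct_sum, smul_eq_mul]
  simp only [dotProduct_comm v, mul_assoc]

lemma cubic_residual_expansion (t a e u v : ℝ) :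
    (t ^ 2 - (a ^ 2 + e)) * t * v
      = 2 * ((t - a) * u * a ^ 2) + 2 * ((t - a) * (v - u) * a ^ 2) + (t - a) ^ 3 * v
        + 3 * ((t - a) ^ 2 * v * a) - e * t * v := by
  ring

theorem stmt_11_general {n p : ℕ} (k : Fin p)
    (x : Fin n → Fin p → ℝ) (ε : Fin n → ℝ) (β βt w wt : Fin p → ℝ) :
    let y : Fin n → ℝ := fun j => dot (x j) β ^ 2 + ε j
    let Δ : Fin p → ℝ := βt - β
    let βhat : ℝ := βt k + dot wt (gradf x y βt)
    βhat - β k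
      = Δ k + (2/(n:ℝ)) * ∑ j, dot (x j) Δ * dot (x j) w * dot (x j) β ^ 2
        + (2/(n:ℝ)) * ∑ j, dot (x j) Δ * dot (x j) (wt - w) * dot (x j) β ^ 2
        + (1/(n:ℝ)) * ∑ j, dot (x j) Δ ^ 3 * dot (x j) wt
        + (3/(n:ℝ)) * ∑ j, dot (x j) Δ ^ 2 * dot (x j) wt * dot (x j) β
        - (1/(n:ℝ)) * ∑ j, ε j * dot (x j) βt * dot (x j) wt := by
  intro y Δ βhat
  simp only [βhat, y, Δ, dot_gradf, dot_sub_right, Pi.sub_apply]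
  rw [Finset.sum_congr rfl fun j _ => cubic_residual_expansion _ _ _ (dot (x j) w) _]
  simp only [Finset.sum_add_distrib, Finset.sum_sub_distrib, ← Finset.mul_sum]
  ring

/-- Exact algebraic decomposition of the error of the debiased estimator
`β̂_k = β̃_k + w̃ᵀ∇f(β̃)` in the model `y_j = (x_jᵀβ)² + ε_j`. -/
theorem stmt_11 {n p : ℕ} (hn : 0 < n) (k : Fin p)
    (x : Fin n → Fin p → ℝ) (ε : Fin n → ℝ) (β βt w wt : Fin p → ℝ) :
    let y : Fin n → ℝ := fun j => dot (x j) β ^ 2 + ε j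
    let Δ : Fin p → ℝ := βt - β
    let βhat : ℝ := βt k + dot wt (gradf x y βt)
    βhat - β k
      = Δ k + (2/(n:ℝ)) * ∑ j, dot (x j) Δ * dot (x j) w * dot (x j) β ^ 2
        + (2/(n:ℝ)) * ∑ j, dot (x j) Δ * dot (x j) (wt - w) * dot (x j) β ^ 2
        + (1/(n:ℝ)) * ∑ j, dot (x j) Δ ^ 3 * dot (x j) wt
        + (3/(n:ℝ)) * ∑ j, dot (x j) Δ ^ 2 * dot (x j) wt * dot (x j) β
        - (1/(n:ℝ)) * ∑ j, ε j * dot (x j) βt * dot (x j) wt :=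
  stmt_11_general k x ε β βt w wt
end
end
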